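/- arXiv:1201.4753 — 2 statements merged into one kernel-verified Lean document; each statement's English description precedes it below -/
import Mathlib

section
/- Let E be a finite-dimensional complex vector space equipped with a nondegenerate symmetric bilinear form b. Then there exists a conjugate-linear involution ν : E → E such that conj(b(ν e₁, ν e₂)) = b(e₁, e₂) for all e₁, e₂ ∈ E, and b(ν e, e) > 0 for all nonzero e ∈ E. Consequently, h(e₁, e₂) := b(e₁, ν e₂) defines a positive definite Hermitian inner product on E. -/
/-!
Over ℂ a nondegenerate symmetric bilinear form is diagonalizable with nonzero diagonal entries,
and rescaling by square roots of these entries gives a basis in which `b x y = ∑ xᵢ yᵢ`.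
Conjugating coordinates in that basis is the required `ν`: then `b (ν x) (ν y) = ∑ x̄ᵢ ȳᵢ`
is the conjugate of `b x y`, and `b (ν x) x = ∑ |xᵢ|²`.
-/

open Module Matrix

namespace Module.Basis

variable {ι R M : Type*} [Fintype ι] [CommSemiring R] [StarRing R] [AddCommMonoid M] [Module R M]

noncomputable def starCoord (w : Basis ι R M) : M ≃ₛₗ[starRingEnd R] M :=
  (w.equivFun.trans (starLinearEquiv R)).trans w.equivFun.symm

@[simp]
theorem equivFun_starCoord (w : Basis ι R M) (x : M) :
    w.equivFun (w.starCoord x) = star (w.equivFun x) := by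
  simp only [starCoord, LinearEquiv.trans_apply, LinearEquiv.apply_symm_apply,
    starLinearEquiv_apply]

@[simp]
theorem starCoord_starCoord (w : Basis ι R M) (x : M) : w.starCoord (w.starCoord x) = x :=
  w.equivFun.injective (by simp only [equivFun_starCoord, star_star])

end Module.Basis

namespace LinearMap

theorem exists_orthonormal_basis_of_isAlgClosed {K V : Type*} [Field K] [IsAlgClosed K]
    [Invertible (2 : K)] [AddCommGroup V] [Module K V] [FiniteDimensional K V]
    {B : LinearMap.BilinForm K V} (hB : IsSymm B) (hB' : B.SeparatingLeft) :
    ∃ w : Basis (Fin (finrank K V)) K V, B.IsOrthoᵢ w ∧ ∀ i, B (w i) (w i) = 1 := by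
  obtain ⟨v, hv⟩ := BilinForm.exists_orthogonal_basis hB
  have hdiag := hv.not_isOrtho_basis_self_of_separatingLeft hB'
  choose c hc using fun i => IsAlgClosed.exists_eq_mul_self (B (v i) (v i))
  have hc0 : ∀ i, c i ≠ 0 := fun i h => hdiag i (by rw [hc i, h, zero_mul])
  refine ⟨v.unitsSMul fun i => (Units.mk0 (c i) (hc0 i))⁻¹, fun i j hij => ?_, fun i => ?_⟩
  · simp [Function.onFun, Basis.unitsSMul_apply, hv hij]
  · simp only [Basis.unitsSMul_apply, map_smul, smul_apply, hc i, Units.smul_def,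
      Units.val_inv_eq_inv_val, Units.val_mk0, smul_eq_mul]
    rw [← mul_assoc, ← mul_inv, inv_mul_cancel₀ (mul_ne_zero (hc0 i) (hc0 i))]

theorem apply_eq_dotProduct_equivFun {ι R M : Type*} [Fintype ι] [DecidableEq ι]
    [CommSemiring R] [AddCommMonoid M] [Module R M] {B : LinearMap.BilinForm R M}
    (w : Basis ι R M) (hw : B.IsOrthoᵢ w) (hw₁ : ∀ i, B (w i) (w i) = 1) (x y : M) :
    B x y = w.equivFun x ⬝ᵥ w.equivFun y := by
  have hB : BilinForm.toMatrix w B = 1 := by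
    ext i j
    rw [BilinForm.toMatrix_apply]
    rcases eq_or_ne i j with rfl | hij
    · rw [hw₁, one_apply_eq]
    · rw [hw hij, one_apply_ne hij]
  rw [← Matrix.toBilin_toMatrix w B, hB, Matrix.toBilin_apply]
  simp [dotProduct, Matrix.one_apply]

section Star

variable {ι R M : Type*} [Fintype ι] [DecidableEq ι] [CommRing R] [StarRing R]
  [AddCommMonoid M] [Module R M] {B : LinearMap.BilinForm R M} {w : Basis ι R M}

theorem star_apply_starCoord_starCoord (hw : B.IsOrthoᵢ w) (hw₁ : ∀ i, B (w i) (w i) = 1)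
    (x y : M) : star (B (w.starCoord x) (w.starCoord y)) = B x y := by
  simp only [apply_eq_dotProduct_equivFun w hw hw₁, Basis.equivFun_starCoord,
    star_dotProduct_star, star_star, dotProduct_comm]

theorem apply_starCoord_self_pos [PartialOrder R] [StarOrderedRing R] [NoZeroDivisors R]
    (hw : B.IsOrthoᵢ w) (hw₁ : ∀ i, B (w i) (w i) = 1) {x : M} (hx : x ≠ 0) :
    0 < B (w.starCoord x) x := by
  rw [apply_eq_dotProduct_equivFun w hw hw₁, Basis.equivFun_starCoord,
    dotProduct_star_self_pos_iff]
  exact w.equivFun.map_ne_zero_iff.mpr hx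

end Star

end LinearMap

open scoped ComplexOrder

/-- A nondegenerate symmetric bilinear form `b` on a finite-dimensional complex
vector space admits a compatible conjugate-linear involution `ν`:
`conj (b (ν e₁) (ν e₂)) = b e₁ e₂` and `b (ν e) e > 0` (a positive real) for
`e ≠ 0`; consequently `h e₁ e₂ := b e₁ (ν e₂)` is a positive definite Hermitian
inner product. -/
theorem stmt10
    {E : Type*} [AddCommGroup E] [Module ℂ E] [FiniteDimensional ℂ E]
    (b : E →ₗ[ℂ] E →ₗ[ℂ] ℂ)
    (hsymm : ∀ x y : E, b x y = b y x)
    (hnd : ∀ v : E, (∀ w : E, b v w = 0) → v = 0) :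
    ∃ ν : E →ₛₗ[starRingEnd ℂ] E,
      (∀ e : E, ν (ν e) = e) ∧
      (∀ e₁ e₂ : E, (starRingEnd ℂ) (b (ν e₁) (ν e₂)) = b e₁ e₂) ∧
      (∀ e : E, e ≠ 0 → 0 < (b (ν e) e).re ∧ (b (ν e) e).im = 0) ∧
      (∀ e₁ e₂ : E, b e₁ (ν e₂) = (starRingEnd ℂ) (b e₂ (ν e₁))) ∧
      (∀ e : E, e ≠ 0 → 0 < (b e (ν e)).re ∧ (b e (ν e)).im = 0) := by
  obtain ⟨w, hw, hw₁⟩ := LinearMap.exists_orthonormal_basis_of_isAlgClosed ⟨hsymm⟩ hnd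
  have hconj (e₁ e₂ : E) : starRingEnd ℂ (b (w.starCoord e₁) (w.starCoord e₂)) = b e₁ e₂ :=
    LinearMap.star_apply_starCoord_starCoord hw hw₁ e₁ e₂
  have hpos {e : E} (he : e ≠ 0) :
      0 < (b (w.starCoord e) e).re ∧ (b (w.starCoord e) e).im = 0 :=
    (Complex.pos_iff.mp (LinearMap.apply_starCoord_self_pos hw hw₁ he)).imp_right Eq.symm
  refine ⟨w.starCoord.toLinearMap, w.starCoord_starCoord, hconj, @hpos, fun e₁ e₂ => ?_,
    fun e he => hsymm e _ ▸ hpos he⟩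
  simp only [LinearEquiv.coe_coe]
  rw [hsymm, ← hconj, w.starCoord_starCoord]
end

section
/- Let W be a 2n-dimensional real inner product space and K an antisymmetric endomorphism. The Pfaffian defined via the Berezin integral of exp(𝐊) satisfies Pf(K)² = det(K), where 𝐊 = (1/2)Σ⟨w_i, K w_j⟩ ŵ^i ∧ ŵ^j. -/
/-!
Put `K` in its real normal form: there is an orthonormal basis `u₁, v₁, …, uₙ, vₙ` with
`K uₖ = μₖ vₖ` and `K vₖ = -μₖ uₖ`, so that `det K = ∏ μₖ²`. The 2-form `𝐊` does not depend on
the orthonormal basis used to write it, and in the adapted basis it is `∑ -μₖ uₖ ∧ vₖ`. Its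
summands commute and square to zero, so `𝐊ⁿ / n! = ∏ (-μₖ) · u₁ ∧ v₁ ∧ ⋯ ∧ uₙ ∧ vₙ`, the only
term of `exp 𝐊` of top degree. The Berezin integral of that wedge product is the determinant of
the adapted basis relative to `w`, which is `±1` because both bases are orthonormal; hence
`Pf(K) = ±∏ μₖ`.
-/

open scoped Nat InnerProductSpace
open ExteriorAlgebra Module

section SquareZeroSum

variable {A : Type*} [Semiring A]

theorem Commute.add_pow_succ_of_mul_self_eq_zero {x y : A} (h : Commute x y) (hx : x * x = 0)
    (m : ℕ) :
    (x + y) ^ (m + 1) = y ^ (m + 1) + (m + 1) • (x * y ^ m) := by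
  induction m with
  | zero => simp [add_comm]
  | succ m ih =>
    have hyx : y ^ (m + 1) * x = x * y ^ (m + 1) := (h.pow_right (m + 1)).eq.symm
    have hxyx : x * y ^ m * x = 0 := by
      rw [mul_assoc, ← (h.pow_right m).eq, ← mul_assoc, hx, zero_mul]
    rw [pow_succ, ih, add_mul, mul_add, mul_add, smul_mul_assoc, smul_mul_assoc, hxyx, hyx,
      mul_assoc, ← pow_succ, ← pow_succ, smul_zero, zero_add, succ_nsmul _ (m + 1)]
    abel

theorem sum_pow_succ_eq_zero_of_mul_self_eq_zero {n : ℕ} (a : Fin n → A)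
    (hcomm : Pairwise fun i j => Commute (a i) (a j)) (hsq : ∀ i, a i * a i = 0) :
    (∑ i, a i) ^ (n + 1) = 0 := by
  induction n with
  | zero => simp
  | succ n ih =>
    have htail := ih (fun i => a i.succ) (fun i j hij => hcomm (Fin.succ_injective _ |>.ne hij))
      (fun i => hsq _)
    have hc : Commute (a 0) (∑ i : Fin n, a i.succ) :=
      Commute.sum_right _ _ _ fun i _ => hcomm (Fin.succ_ne_zero i).symm
    rw [Fin.sum_univ_succ, hc.add_pow_succ_of_mul_self_eq_zero (hsq 0), pow_succ', htail,
      mul_zero, mul_zero, smul_zero, add_zero]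

theorem sum_pow_eq_factorial_smul_prod_of_mul_self_eq_zero {n : ℕ} (a : Fin n → A)
    (hcomm : Pairwise fun i j => Commute (a i) (a j)) (hsq : ∀ i, a i * a i = 0) :
    (∑ i, a i) ^ n = n ! • (List.ofFn a).prod := by
  induction n with
  | zero => simp
  | succ n ih =>
    have hcomm' : Pairwise fun i j : Fin n => Commute (a i.succ) (a j.succ) :=
      fun i j hij => hcomm (Fin.succ_injective _ |>.ne hij)
    have hc : Commute (a 0) (∑ i : Fin n, a i.succ) :=
      Commute.sum_right _ _ _ fun i _ => hcomm (Fin.succ_ne_zero i).symm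
    rw [Fin.sum_univ_succ, hc.add_pow_succ_of_mul_self_eq_zero (hsq 0),
      sum_pow_succ_eq_zero_of_mul_self_eq_zero _ hcomm' fun i => hsq _,
      ih _ hcomm' fun i => hsq _, List.ofFn_succ, List.prod_cons, Nat.factorial_succ, zero_add,
      mul_smul_comm, smul_smul]

end SquareZeroSum

theorem List.prod_ofFn_smul {R A : Type*} [CommMonoid R] [Monoid A] [MulAction R A]
    [IsScalarTower R A A] [SMulCommClass R A A] {n : ℕ} (c : Fin n → R) (a : Fin n → A) :
    (List.ofFn fun k => c k • a k).prod = (∏ k, c k) • (List.ofFn a).prod := by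
  induction n with
  | zero => simp
  | succ n ih =>
    rw [List.ofFn_succ, List.ofFn_succ, List.prod_cons, List.prod_cons, ih, Fin.prod_univ_succ,
      smul_mul_smul_comm]

/-- Enumerates `Fin 2 × Fin n` as `(0, 0), (1, 0), (0, 1), (1, 1), …`. -/
def finPairEquiv (n : ℕ) : Fin 2 × Fin n ≃ Fin (2 * n) :=
  (Equiv.prodComm _ _).trans (finProdFinEquiv.trans (finCongr (Nat.mul_comm n 2)))

theorem finPairEquiv_apply_val (n : ℕ) (t : Fin 2) (k : Fin n) :
    (finPairEquiv n (t, k) : ℕ) = 2 * k + t := by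
  simp [finPairEquiv, finProdFinEquiv]
  omega

namespace ExteriorAlgebra

section CommRing

variable {R M : Type*} [CommRing R] [AddCommGroup M] [Module R M]

theorem ι_mul_ι_comm (x y : M) : ι R x * ι R y = -(ι R y * ι R x) :=
  eq_neg_of_add_eq_zero_left (ι_add_mul_swap x y)

theorem commute_ι_mul_ι_ι (x y z : M) : Commute (ι R x * ι R y) (ι R z) := by
  rw [Commute, SemiconjBy, mul_assoc, ι_mul_ι_comm y z, mul_neg, ← mul_assoc, ι_mul_ι_comm x z,
    neg_mul, neg_neg, mul_assoc]

theorem commute_ι_mul_ι (x y z t : M) : Commute (ι R x * ι R y) (ι R z * ι R t) :=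
  (commute_ι_mul_ι_ι x y z).mul_right (commute_ι_mul_ι_ι x y t)

theorem ι_mul_ι_mul_self (x y : M) : ι R x * ι R y * (ι R x * ι R y) = 0 := by
  rw [← mul_assoc, (commute_ι_mul_ι_ι x y x).eq, ← mul_assoc, ι_sq_zero, zero_mul, zero_mul]

theorem ι_mul_ι_mem_range_pow_two (x y : M) :
    ι R x * ι R y ∈ (LinearMap.range (ι R : M →ₗ[R] ExteriorAlgebra R M)) ^ 2 := by
  rw [sq]
  exact Submodule.mul_mem_mul (LinearMap.mem_range_self _ _) (LinearMap.mem_range_self _ _)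

theorem ιMulti_comp_finPairEquiv_symm {n : ℕ} (g : Fin 2 × Fin n → M) :
    ιMulti R (2 * n) (g ∘ (finPairEquiv n).symm) =
      (List.ofFn fun k => ι R (g (0, k)) * ι R (g (1, k))).prod := by
  have hsymm (t : Fin 2) (k : Fin n) (h) : (finPairEquiv n).symm ⟨2 * k + t, h⟩ = (t, k) := by
    rw [Equiv.symm_apply_eq]
    exact Fin.ext (finPairEquiv_apply_val n t k).symm
  rw [ιMulti_apply, List.ofFn_mul', List.prod_flatten, List.map_ofFn]
  refine congrArg List.prod (congrArg List.ofFn (funext fun k => ?_))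
  simpa [List.ofFn_succ] using congrArg₂ (fun a b => ι R (g a) * ι R (g b))
    (hsymm 0 k (by omega)) (hsymm 1 k (by omega))

theorem apply_ιMulti_eq_det {n : ℕ} (b : Basis (Fin n) R M) (B : ExteriorAlgebra R M →ₗ[R] R)
    (hB : B (ιMulti R n b) = 1) (v : Fin n → M) : B (ιMulti R n v) = b.det v := by
  have h := AlternatingMap.eq_smul_basis_det b (B.compAlternatingMap (ιMulti R n))
  simpa [hB] using congrArg (· v) h

end CommRing

section Field

variable {R M : Type*} [Field R] [AddCommGroup M] [Module R M]

theorem apply_sum_inv_factorial_smul_pow {n N : ℕ} (hnN : n < N)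
    (B : ExteriorAlgebra R M →ₗ[R] R)
    (hB : ∀ i : ℕ, i ≠ 2 * n →
      ∀ x ∈ (LinearMap.range (ι R : M →ₗ[R] ExteriorAlgebra R M)) ^ i, B x = 0)
    {x : ExteriorAlgebra R M} (hx : x ∈ (LinearMap.range (ι R : M →ₗ[R] ExteriorAlgebra R M)) ^ 2) :
    B (∑ k ∈ Finset.range N, (k ! : R)⁻¹ • x ^ k) = (n ! : R)⁻¹ * B (x ^ n) := by
  rw [map_sum, Finset.sum_eq_single_of_mem n (Finset.mem_range.mpr hnN), map_smul, smul_eq_mul]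
  intro k _ hkn
  have hxk : x ^ k ∈ (LinearMap.range (ι R : M →ₗ[R] ExteriorAlgebra R M)) ^ (2 * k) := by
    rw [pow_mul]
    exact Submodule.pow_mem_pow _ hx k
  rw [map_smul, hB (2 * k) (by omega) _ hxk, smul_zero]

theorem half_smul_sum_ι_map_mul_ι [NeZero (2 : R)] {κ : Type*} [Fintype κ] (K : M →ₗ[R] M)
    (e : Fin 2 × κ → M) (μ : κ → R)
    (hK : ∀ k, K (e (0, k)) = μ k • e (1, k) ∧ K (e (1, k)) = -μ k • e (0, k)) :
    (1 / 2 : R) • ∑ p, ι R (K (e p)) * ι R (e p) =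
      ∑ k, (-μ k) • (ι R (e (0, k)) * ι R (e (1, k))) := by
  rw [Fintype.sum_prod_type, Finset.sum_comm, Finset.smul_sum]
  refine Finset.sum_congr rfl fun k _ => ?_
  rw [Fin.sum_univ_two, (hK k).1, (hK k).2, map_smul, map_smul, smul_mul_assoc, smul_mul_assoc,
    ι_mul_ι_comm (e (1, k)), smul_neg, ← neg_smul, ← add_smul, smul_smul]
  congr 1
  field_simp
  ring

end Field

end ExteriorAlgebra

namespace OrthonormalBasis

variable {W κ κ' : Type*} [NormedAddCommGroup W] [InnerProductSpace ℝ W] [Fintype κ] [Fintype κ']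

theorem sum_sum_inner_smul_eq_sum {M : Type*} [AddCommGroup M] [Module ℝ M]
    (b : OrthonormalBasis κ ℝ W) (K : W →ₗ[ℝ] W) (β : W →ₗ[ℝ] W →ₗ[ℝ] M) :
    ∑ i, ∑ j, ⟪b i, K (b j)⟫_ℝ • β (b i) (b j) = ∑ j, β (K (b j)) (b j) := by
  rw [Finset.sum_comm]
  congr 1 with j
  conv_rhs => rw [← b.sum_repr' (K (b j))]
  simp only [map_sum, map_smul, LinearMap.sum_apply, LinearMap.smul_apply]

theorem sum_map_apply_eq {M : Type*} [AddCommGroup M] [Module ℝ M]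
    (b : OrthonormalBasis κ ℝ W) (c : OrthonormalBasis κ' ℝ W) (K : W →ₗ[ℝ] W)
    (β : W →ₗ[ℝ] W →ₗ[ℝ] M) :
    ∑ i, β (K (b i)) (b i) = ∑ j, β (K (c j)) (c j) := by
  calc ∑ i, β (K (b i)) (b i) = ∑ i, ∑ j, ⟪c j, b i⟫_ℝ • β (K (b i)) (c j) := by
        congr 1 with i
        nth_rw 2 [← c.sum_repr' (b i)]
        simp only [map_sum, map_smul]
    _ = ∑ j, β (K (c j)) (c j) := by
        rw [Finset.sum_comm]
        congr 1 with j
        have hKc : K (c j) = ∑ i, ⟪b i, c j⟫_ℝ • K (b i) := by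
          conv_lhs => rw [← b.sum_repr' (c j)]
          simp only [map_sum, map_smul]
        simp only [hKc, map_sum, map_smul, LinearMap.sum_apply, LinearMap.smul_apply,
          real_inner_comm]

theorem half_smul_sum_sum_inner_smul_ι_mul_ι (b : OrthonormalBasis κ ℝ W)
    (e : OrthonormalBasis (Fin 2 × κ') ℝ W) (K : W →ₗ[ℝ] W) (μ : κ' → ℝ)
    (hK : ∀ k, K (e (0, k)) = μ k • e (1, k) ∧ K (e (1, k)) = -μ k • e (0, k)) :
    (1 / 2 : ℝ) • ∑ i, ∑ j, ⟪b i, K (b j)⟫_ℝ • (ι ℝ (b i) * ι ℝ (b j)) =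
      ∑ k, (-μ k) • (ι ℝ (e (0, k)) * ι ℝ (e (1, k))) := by
  let β := (LinearMap.mul ℝ (ExteriorAlgebra ℝ W)).compl₁₂ (ι ℝ) (ι ℝ)
  rw [← half_smul_sum_ι_map_mul_ι K e μ hK]
  exact congrArg _ ((b.sum_sum_inner_smul_eq_sum K β).trans (b.sum_map_apply_eq e K β))

end OrthonormalBasis

section SkewNormalForm

variable {E : Type*} [NormedAddCommGroup E] [InnerProductSpace ℝ E] {K : E →ₗ[ℝ] E}

theorem orthogonal_invariant_of_skew (hK : ∀ x y : E, ⟪K x, y⟫_ℝ = -⟪x, K y⟫_ℝ)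
    {U : Submodule ℝ E} (hU : ∀ u ∈ U, K u ∈ U) : ∀ z ∈ Uᗮ, K z ∈ Uᗮ := by
  intro z hz
  rw [Submodule.mem_orthogonal]
  intro u hu
  rw [← neg_eq_zero, ← hK, Submodule.inner_right_of_mem_orthogonal (hU u hu) hz]

theorem inner_self_map_eq_zero_of_skew (hK : ∀ x y : E, ⟪K x, y⟫_ℝ = -⟪x, K y⟫_ℝ) (x : E) :
    ⟪x, K x⟫_ℝ = 0 := by
  have := hK x x
  rw [real_inner_comm] at this
  linarith

theorem exists_orthonormal_pair_of_eigenvector (hK : ∀ x y : E, ⟪K x, y⟫_ℝ = -⟪x, K y⟫_ℝ)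
    {x : E} {c : ℝ} (hx : ‖x‖ = 1) (hKx : K x ≠ 0) (hKKx : K (K x) = c • x) :
    ∃ (p : Fin 2 → E) (μ : ℝ), Orthonormal ℝ p ∧ K (p 0) = μ • p 1 ∧ K (p 1) = -μ • p 0 := by
  set μ := ‖K x‖
  have hμ : μ ≠ 0 := norm_ne_zero_iff.mpr hKx
  have hc : c = -μ ^ 2 := by
    have := hK (K x) x
    rw [hKKx, real_inner_smul_left, real_inner_self_eq_norm_sq, real_inner_self_eq_norm_sq,
      hx] at this
    linarith
  have hxKx := inner_self_map_eq_zero_of_skew hK x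
  refine ⟨![x, μ⁻¹ • K x], μ, ⟨Fin.forall_fin_two.mpr ⟨hx, ?_⟩, fun i j hij => ?_⟩, ?_, ?_⟩
  · simp [norm_smul, hμ, μ]
  · fin_cases i <;> fin_cases j <;> simp_all [real_inner_smul_right, real_inner_comm x]
  · simp [smul_smul, mul_inv_cancel₀ hμ]
  · simp only [Matrix.cons_val_one, Matrix.cons_val_zero, map_smul, hKKx, smul_smul, hc]
    congr 1
    field_simp

theorem exists_orthonormal_pair_of_skew [FiniteDimensional ℝ E]
    (hK : ∀ x y : E, ⟪K x, y⟫_ℝ = -⟪x, K y⟫_ℝ) (hE : 2 ≤ finrank ℝ E) :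
    ∃ (p : Fin 2 → E) (μ : ℝ), Orthonormal ℝ p ∧ K (p 0) = μ • p 1 ∧ K (p 1) = -μ • p 0 := by
  by_cases hK0 : K = 0
  · let b := stdOrthonormalBasis ℝ E
    exact ⟨b ∘ Fin.castLE hE, 0, b.orthonormal.comp _ (Fin.castLE_injective hE), by simp [hK0],
      by simp [hK0]⟩
  have hS : (K ∘ₗ K).IsSymmetric := fun x y => by
    rw [LinearMap.comp_apply, LinearMap.comp_apply, hK, hK, neg_neg]
  set v := hS.eigenvectorBasis rfl
  obtain ⟨i, hi⟩ : ∃ i, K (v i) ≠ 0 := by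
    by_contra! h
    exact hK0 (v.toBasis.ext fun i => by simpa using h i)
  exact exists_orthonormal_pair_of_eigenvector hK (v.orthonormal.1 i) hi
    (hS.apply_eigenvectorBasis rfl i)

theorem exists_orthonormal_skew_normal_form (hK : ∀ x y : E, ⟪K x, y⟫_ℝ = -⟪x, K y⟫_ℝ)
    (m : ℕ) (hE : finrank ℝ E = 2 * m) :
    ∃ (b : Fin 2 × Fin m → E) (μ : Fin m → ℝ), Orthonormal ℝ b ∧
      ∀ k, K (b (0, k)) = μ k • b (1, k) ∧ K (b (1, k)) = -μ k • b (0, k) := by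
  induction m generalizing E with
  | zero => exact ⟨fun p => p.2.elim0, Fin.elim0, ⟨fun p => p.2.elim0, fun p => p.2.elim0⟩,
      fun k => k.elim0⟩
  | succ m ih =>
    have : FiniteDimensional ℝ E := .of_finrank_pos (by omega)
    obtain ⟨p, μ₀, hp, hKp₀, hKp₁⟩ := exists_orthonormal_pair_of_skew hK (by omega)
    set U := Submodule.span ℝ (Set.range p)
    have hpU (t : Fin 2) : p t ∈ U := Submodule.subset_span ⟨t, rfl⟩
    have hKU : ∀ u ∈ U, K u ∈ U := by
      refine fun u hu => (Submodule.span_le (p := U.comap K)).mpr ?_ hu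
      rintro _ ⟨t, rfl⟩
      fin_cases t
      · simpa [hKp₀] using U.smul_mem μ₀ (hpU 1)
      · simpa [hKp₁] using U.smul_mem (-μ₀) (hpU 0)
    have hUperp : finrank ℝ Uᗮ = 2 * m := by
      have := U.finrank_add_finrank_orthogonal
      rw [finrank_span_eq_card hp.linearIndependent, Fintype.card_fin] at this
      omega
    obtain ⟨b, μ, hb, hKb⟩ := ih (K := K.restrict (orthogonal_invariant_of_skew hK hKU))
      (fun x y => hK x y) hUperp
    refine ⟨fun q => Fin.cases (p q.1) (fun k => (b (q.1, k) : E)) q.2, Fin.cases μ₀ μ, ?_, ?_⟩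
    · rw [orthonormal_iff_ite]
      rintro ⟨t, k⟩ ⟨t', k'⟩
      induction k using Fin.cases <;> induction k' using Fin.cases
      · simp [orthonormal_iff_ite.mp hp]
      case zero.succ k' =>
        simpa [(Fin.succ_ne_zero k').symm] using
          Submodule.inner_right_of_mem_orthogonal (hpU t) (b (t', k')).2
      case succ.zero k =>
        simpa [Fin.succ_ne_zero k] using
          Submodule.inner_left_of_mem_orthogonal (hpU t') (b (t, k)).2
      case succ.succ k k' =>
        simpa [Submodule.coe_inner] using orthonormal_iff_ite.mp hb (t, k) (t', k')
    · intro k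
      cases k using Fin.cases
      · exact ⟨hKp₀, hKp₁⟩
      · exact ⟨congrArg Subtype.val (hKb _).1, congrArg Subtype.val (hKb _).2⟩

theorem exists_orthonormalBasis_skew_normal_form [FiniteDimensional ℝ E]
    (hK : ∀ x y : E, ⟪K x, y⟫_ℝ = -⟪x, K y⟫_ℝ) (m : ℕ) (hE : finrank ℝ E = 2 * m) :
    ∃ (b : OrthonormalBasis (Fin 2 × Fin m) ℝ E) (μ : Fin m → ℝ),
      ∀ k, K (b (0, k)) = μ k • b (1, k) ∧ K (b (1, k)) = -μ k • b (0, k) := by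
  obtain ⟨b, μ, hb, hKb⟩ := exists_orthonormal_skew_normal_form hK m hE
  exact ⟨.mk hb (hb.linearIndependent.span_eq_top_of_card_eq_finrank' (by simp [hE])).ge, μ,
    by simpa using hKb⟩

end SkewNormalForm

theorem LinearMap.det_eq_prod_sq_of_rotation_blocks {R M κ : Type*} [CommRing R]
    [AddCommGroup M] [Module R M] [Fintype κ] [DecidableEq κ] (b : Basis (Fin 2 × κ) R M)
    (K : M →ₗ[R] M) (μ : κ → R)
    (hK : ∀ k, K (b (0, k)) = μ k • b (1, k) ∧ K (b (1, k)) = -μ k • b (0, k)) :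
    LinearMap.det K = ∏ k, μ k ^ 2 := by
  have hM : LinearMap.toMatrix b b K = Matrix.blockDiagonal fun k => !![0, -μ k; μ k, 0] := by
    ext ⟨i, k⟩ ⟨j, k'⟩
    rw [LinearMap.toMatrix_apply, Matrix.blockDiagonal_apply]
    by_cases h : k = k' <;> fin_cases i <;> fin_cases j <;> simp [h, (hK k').1, (hK k').2]
  rw [← LinearMap.det_toMatrix b, hM, Matrix.det_blockDiagonal]
  simp [Matrix.det_fin_two, sq]

/-- `Pf(K)² = det K` for an antisymmetric endomorphism `K` of a `2n`-dimensional real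
inner product space.  The Pfaffian is the Berezin integral of `exp 𝐊`, where
`𝐊 = (1/2) ∑ ⟨w i, K (w j)⟩ ŵ^i ∧ ŵ^j` in the exterior algebra (via the orthonormal
basis `w`), and the Berezin integral `B` vanishes on components of degree `≠ 2n` and
sends the top basis element `w^1 ∧ ⋯ ∧ w^{2n}` to `1`. -/
theorem stmt15
    {W : Type*} [NormedAddCommGroup W] [InnerProductSpace ℝ W]
    (n : ℕ)
    (w : OrthonormalBasis (Fin (2 * n)) ℝ W)
    (K : W →ₗ[ℝ] W)
    (hK : ∀ x y : W, (inner ℝ (K x) y : ℝ) = -(inner ℝ x (K y) : ℝ))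
    (Kform : ExteriorAlgebra ℝ W)
    (hKform : Kform = (1 / 2 : ℝ) •
      ∑ i : Fin (2 * n), ∑ j : Fin (2 * n),
        (inner ℝ (w i) (K (w j)) : ℝ) • (ι ℝ (w i) * ι ℝ (w j)))
    (B : ExteriorAlgebra ℝ W →ₗ[ℝ] ℝ)
    (hB0 : ∀ i : ℕ, i ≠ 2 * n →
      ∀ x ∈ (LinearMap.range (ι ℝ : W →ₗ[ℝ] ExteriorAlgebra ℝ W)) ^ i, B x = 0)
    (hB1 : B ((List.ofFn fun i : Fin (2 * n) => ι ℝ (w i)).prod) = 1) :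
    (B (∑ k ∈ Finset.range (2 * n + 1),
        ((k.factorial : ℝ))⁻¹ • Kform ^ k)) ^ 2 = LinearMap.det K := by
  have : FiniteDimensional ℝ W := w.toBasis.finiteDimensional_of_finite
  obtain ⟨e, μ, he⟩ := exists_orthonormalBasis_skew_normal_form hK n
    (by simp [finrank_eq_card_basis w.toBasis])
  rw [w.half_smul_sum_sum_inner_smul_ι_mul_ι e K μ he] at hKform
  have hmem : Kform ∈ (LinearMap.range (ι ℝ : W →ₗ[ℝ] ExteriorAlgebra ℝ W)) ^ 2 :=
    hKform ▸ Submodule.sum_mem _ fun k _ => Submodule.smul_mem _ _ (ι_mul_ι_mem_range_pow_two _ _)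
  have hpow : Kform ^ n = n ! • (∏ k, -μ k) • ιMulti ℝ (2 * n) (e.reindex (finPairEquiv n)) := by
    rw [hKform, sum_pow_eq_factorial_smul_prod_of_mul_self_eq_zero, List.prod_ofFn_smul,
      OrthonormalBasis.coe_reindex, ιMulti_comp_finPairEquiv_symm]
    · exact fun i j _ => ((commute_ι_mul_ι _ _ _ _).smul_left _).smul_right _
    · exact fun k => by rw [smul_mul_smul_comm, ι_mul_ι_mul_self, smul_zero]
  have hdet : (w.toBasis.det (e.reindex (finPairEquiv n))) ^ 2 = 1 := by
    rcases w.det_to_matrix_orthonormalBasis_real (e.reindex (finPairEquiv n)) with h | h <;>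
      rw [h] <;> norm_num
  rw [apply_sum_inv_factorial_smul_pow (by omega) B hB0 hmem, hpow, map_nsmul, map_smul,
    apply_ιMulti_eq_det w.toBasis B (by rwa [ιMulti_apply]), nsmul_eq_mul, smul_eq_mul,
    ← mul_assoc, inv_mul_cancel₀ (by positivity), one_mul, mul_pow, hdet, mul_one,
    LinearMap.det_eq_prod_sq_of_rotation_blocks e.toBasis K μ (by simpa using he),
    ← Finset.prod_pow]
  simp only [neg_sq]
end
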